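/- arXiv:2411.09552 — 2 statements merged into one kernel-verified Lean document; each statement's English description precedes it below -/
import Mathlib

section
/- Let h ∈ ℕ^d be a histogram with order statistics h_(1) ≥ ... ≥ h_(k), and for r ∈ ℕ, j ∈ [k] define c(r,j) = |{ j' ∈ [d] : h[j'] ≥ h_(j) - r }|. Fix r ≥ 1 and i ∈ [k], and let G(r,i) be the set of injective sequences s : [k] → [d] such that max_{j∈[k]}(h_(j) - h[s[j]]) = r, h[s[j]] > h_(j) - r for all j < i, h[s[i]] = h_(i) - r, and h[s[j]] ≥ h_(j) - r for all j > i. Then |G(r,i)| = (∏_{j=1}^{i-1} (c(r-1,j) - (j-1))) · (c(r,i) - c(r-1,i)) · (∏_{j=i+1}^{k} (c(r,j) - (j-1))). -/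
/-- The `j`-th largest entry (1-indexed) of the histogram `h`. -/
def orderStat {d : ℕ} (h : Fin d → ℕ) (j : ℕ) : ℕ :=
  (List.insertionSort (· ≥ ·) (List.ofFn h)).getD (j - 1) 0

/-- The loss `L(h, s) = max_{j ∈ [k]} (h_(j) - h[s j])`. -/
def seqLoss {d k : ℕ} [NeZero k] (h : Fin d → ℕ) (s : Fin k → Fin d) : ℤ :=
  Finset.univ.sup' Finset.univ_nonempty
    (fun j : Fin k => (orderStat h ((j : ℕ) + 1) : ℤ) - (h (s j) : ℤ))

/-- `c(r, j) = |{ j' ∈ [d] : h[j'] ≥ h_(j) - r }|`. -/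
def cnt {d : ℕ} (h : Fin d → ℕ) (r j : ℕ) : ℕ :=
  (Finset.univ.filter (fun j' : Fin d => (orderStat h j : ℤ) - (r : ℤ) ≤ (h j' : ℤ))).card

open Classical in
/-- `G(r, i)`: the injective sequences `s : [k] → [d]` whose loss equals `r` and whose
first coordinate attaining loss `r` is position `i` (1-indexed). -/
noncomputable def groupG {d k : ℕ} [NeZero k] (h : Fin d → ℕ) (r i : ℕ) :
    Finset (Fin k → Fin d) :=
  Finset.univ.filter (fun s : Fin k → Fin d =>
    Function.Injective s ∧ seqLoss h s = (r : ℤ) ∧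
    (∀ j : Fin k, (j : ℕ) + 1 < i →
      (orderStat h ((j : ℕ) + 1) : ℤ) - (r : ℤ) < (h (s j) : ℤ)) ∧
    (∀ j : Fin k, (j : ℕ) + 1 = i →
      (h (s j) : ℤ) = (orderStat h ((j : ℕ) + 1) : ℤ) - (r : ℤ)) ∧
    (∀ j : Fin k, i < (j : ℕ) + 1 →
      (orderStat h ((j : ℕ) + 1) : ℤ) - (r : ℤ) ≤ (h (s j) : ℤ)))


-- ===== auxiliary lemmas =====

section ChainCount

open Finset

variable {α : Type*} [Fintype α] [DecidableEq α]

lemma filter_card_castSucc {k : ℕ} (Q : Fin (k+1) → Prop) [DecidablePred Q]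
    (hQ : ∀ l, Q l → l ≠ Fin.last k) :
    (univ.filter Q).card = (univ.filter (fun l : Fin k => Q l.castSucc)).card := by
  refine Finset.card_bij' (fun l hl => l.castPred (hQ l (by simpa using hl)))
    (fun l _ => l.castSucc) ?_ ?_ ?_ ?_
  · intro l hl
    simp only [mem_filter, mem_univ, true_and] at hl ⊢
    rwa [Fin.castSucc_castPred]
  · intro l hl
    simp only [mem_filter, mem_univ, true_and] at hl ⊢
    exact hl
  · intro l hl; simp
  · intro l hl; simp [Fin.castSucc_castPred]

lemma chain_count : ∀ (k : ℕ) (B : Fin k → Finset α),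
    (∀ l j : Fin k, l < j → B l ⊆ B j ∨ Disjoint (B l) (B j)) →
    ((Finset.univ.filter (fun s : Fin k → α => Function.Injective s ∧ ∀ j, s j ∈ B j)).card : ℤ)
      = ∏ j : Fin k, ((B j).card -
          ((Finset.univ.filter (fun l : Fin k => l < j ∧ B l ⊆ B j)).card : ℤ)) := by
  intro k
  induction k with
  | zero =>
    intro B _
    rw [Fin.prod_univ_zero]
    norm_cast
  | succ k IH =>
    intro B hcond
    set B' : Fin k → Finset α := fun l => B l.castSucc with hB'
    have hcond' : ∀ l j : Fin k, l < j → B' l ⊆ B' j ∨ Disjoint (B' l) (B' j) := by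
      intro l j hlj
      exact hcond l.castSucc j.castSucc (by simpa using hlj)
    set n : ℕ := (univ.filter (fun l : Fin k => B l.castSucc ⊆ B (Fin.last k))).card with hn
    set T : Finset (Fin (k+1) → α) :=
      univ.filter (fun s => Function.Injective s ∧ ∀ j, s j ∈ B j) with hT
    set T' : Finset (Fin k → α) :=
      univ.filter (fun t => Function.Injective t ∧ ∀ j, t j ∈ B' j) with hT'
    have hmap : ∀ s ∈ T, Fin.init s ∈ T' := by
      intro s hs
      simp only [hT, hT', mem_filter, mem_univ, true_and] at hs ⊢
      refine ⟨fun a b hab => ?_, fun j => hs.2 j.castSucc⟩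
      exact Fin.castSucc_injective k (hs.1 hab)
    have hfiber : ∀ t ∈ T', (T.filter (fun s => Fin.init s = t)).card
        = (B (Fin.last k)).card - n := by
      intro t ht
      simp only [hT', mem_filter, mem_univ, true_and] at ht
      have himage : B (Fin.last k) ∩ Finset.image t univ
          = Finset.image t (univ.filter (fun l : Fin k => B l.castSucc ⊆ B (Fin.last k))) := by
        ext x
        simp only [mem_inter, mem_image, mem_filter, mem_univ, true_and]
        constructor
        · rintro ⟨hx, l, rfl⟩
          refine ⟨l, ?_, rfl⟩
          rcases hcond l.castSucc (Fin.last k) (Fin.castSucc_lt_last l) with hsub | hdis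
          · exact hsub
          · exact absurd rfl (hdis.forall_ne_finset (ht.2 l) hx)
        · rintro ⟨l, hsub, rfl⟩
          exact ⟨hsub (ht.2 l), l, rfl⟩
      have hcardint : (B (Fin.last k) ∩ Finset.image t univ).card = n := by
        rw [himage, Finset.card_image_of_injective _ ht.1]
      have hbij : (T.filter (fun s => Fin.init s = t)).card
          = (B (Fin.last k) \ Finset.image t univ).card := by
        refine Finset.card_bij (fun s _ => s (Fin.last k)) ?_ ?_ ?_
        · intro s hs
          simp only [hT, mem_filter, mem_univ, true_and] at hs
          obtain ⟨⟨hinj, hmem⟩, hinit⟩ := hs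
          simp only [mem_sdiff, mem_image, mem_univ, true_and]
          refine ⟨hmem (Fin.last k), ?_⟩
          rintro ⟨l, hl⟩
          rw [← hinit] at hl
          have : l.castSucc = Fin.last k := hinj hl
          exact absurd this (Fin.ne_last_of_lt (Fin.castSucc_lt_last l))
        · intro s1 hs1 s2 hs2 heq
          simp only [mem_filter] at hs1 hs2
          funext j
          rcases Fin.eq_castSucc_or_eq_last j with ⟨j', rfl⟩ | rfl
          · have := congrFun (hs1.2.trans hs2.2.symm) j'
            simpa [Fin.init] using this
          · exact heq
        · intro a ha
          simp only [mem_sdiff, mem_image, mem_univ, true_and] at ha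
          refine ⟨Fin.snoc t a, ?_, by simp⟩
          simp only [hT, mem_filter, mem_univ, true_and, Fin.init_snoc, and_true]
          constructor
          · intro x y hxy
            rcases Fin.eq_castSucc_or_eq_last x with ⟨x', rfl⟩ | rfl <;>
              rcases Fin.eq_castSucc_or_eq_last y with ⟨y', rfl⟩ | rfl <;>
              simp only [Fin.snoc_castSucc, Fin.snoc_last] at hxy
            · exact congrArg Fin.castSucc (ht.1 hxy)
            · exact absurd hxy (fun hc => ha.2 ⟨x', hc⟩)
            · exact absurd hxy.symm (fun hc => ha.2 ⟨y', hc⟩)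
            · rfl
          · intro j
            rcases Fin.eq_castSucc_or_eq_last j with ⟨l, rfl⟩ | rfl
            · simpa using ht.2 l
            · simpa using ha.1
      rw [hbij]
      have := Finset.card_sdiff_add_card_inter (B (Fin.last k)) (Finset.image t univ)
      omega
    have hcount : T.card = T'.card * ((B (Fin.last k)).card - n) := by
      rw [Finset.card_eq_sum_card_fiberwise hmap, Finset.sum_congr rfl hfiber,
        Finset.sum_const, smul_eq_mul]
    rw [Fin.prod_univ_castSucc]
    have hlastn : ((univ.filter (fun l : Fin (k+1) => l < Fin.last k ∧ B l ⊆ B (Fin.last k))).card) = n := by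
      rw [filter_card_castSucc (fun l => l < Fin.last k ∧ B l ⊆ B (Fin.last k))
        (fun l hl => Fin.ne_last_of_lt hl.1)]
      rw [hn]
      congr 1
      ext l
      simp [Fin.castSucc_lt_last]
    have hcastn : ∀ j : Fin k,
        ((univ.filter (fun l : Fin (k+1) => l < j.castSucc ∧ B l ⊆ B j.castSucc)).card)
          = (univ.filter (fun l : Fin k => l < j ∧ B' l ⊆ B' j)).card := by
      intro j
      rw [filter_card_castSucc (fun l => l < j.castSucc ∧ B l ⊆ B j.castSucc)
        (fun l hl => Fin.ne_last_of_lt (lt_of_lt_of_le hl.1 (Fin.le_last _)))]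
      congr 1
    have hIH := IH B' hcond'
    have hprodeq : (∏ j : Fin k, ((B j.castSucc).card -
          ((univ.filter (fun l : Fin (k+1) => l < j.castSucc ∧ B l ⊆ B j.castSucc)).card : ℤ)))
        = (T'.card : ℤ) := by
      have h2 : ((T'.card : ℤ)) = ∏ j : Fin k, ((B' j).card -
          ((univ.filter (fun l : Fin k => l < j ∧ B' l ⊆ B' j)).card : ℤ)) := hIH
      rw [h2]
      exact Finset.prod_congr rfl (fun j _ => by rw [hcastn j])
    rcases Finset.eq_empty_or_nonempty T' with hT'e | hT'ne
    · have hTe : T = ∅ := by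
        rw [Finset.eq_empty_iff_forall_notMem]
        intro s hs
        exact Finset.eq_empty_iff_forall_notMem.mp hT'e _ (hmap s hs)
      rw [hTe, hprodeq, hT'e]
      simp
    · obtain ⟨t, ht⟩ := hT'ne
      have hnle : n ≤ (B (Fin.last k)).card := by
        have ht' := ht
        simp only [hT', mem_filter, mem_univ, true_and] at ht'
        calc n = (Finset.image t (univ.filter (fun l : Fin k => B l.castSucc ⊆ B (Fin.last k)))).card := by
                rw [Finset.card_image_of_injective _ ht'.1]
          _ ≤ (B (Fin.last k)).card := by
                apply Finset.card_le_card
                intro x hx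
                simp only [mem_image, mem_filter, mem_univ, true_and] at hx
                obtain ⟨l, hsub, rfl⟩ := hx
                exact hsub (ht'.2 l)
      rw [hcount]
      push_cast [hnle]
      rw [hprodeq, hlastn]

end ChainCount

section OrderStatLemmas

lemma sorted_ord {d : ℕ} (h : Fin d → ℕ) :
    List.Pairwise (· ≥ ·) (List.insertionSort (· ≥ ·) (List.ofFn h)) :=
  List.pairwise_insertionSort _ _

lemma orderStat_anti {d : ℕ} (h : Fin d → ℕ) {a b : ℕ} (hab : a ≤ b) :
    orderStat h b ≤ orderStat h a := by
  set L := List.insertionSort (· ≥ ·) (List.ofFn h) with hL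
  unfold orderStat
  rw [← hL]
  by_cases hb : b - 1 < L.length
  · have ha : a - 1 < L.length := lt_of_le_of_lt (by omega) hb
    rw [List.getD_eq_getElem?_getD, List.getD_eq_getElem?_getD,
      List.getElem?_eq_getElem hb, List.getElem?_eq_getElem ha]
    simp only [Option.getD_some]
    have := (sorted_ord h).rel_get_of_le (a := ⟨a-1, ha⟩) (b := ⟨b-1, hb⟩)
      (by simp [Fin.le_def]; omega)
    simpa using this
  · rw [List.getD_eq_default _ _ (by omega)]
    exact Nat.zero_le _

lemma card_filter_le_eq_countP {d : ℕ} (h : Fin d → ℕ) (t : ℤ) :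
    (Finset.univ.filter (fun x : Fin d => t ≤ (h x : ℤ))).card
      = List.countP (fun a : ℕ => decide (t ≤ (a : ℤ)))
          (List.insertionSort (· ≥ ·) (List.ofFn h)) := by
  rw [List.Perm.countP_eq _ (List.perm_insertionSort _ _)]
  have h1 : (Finset.univ.filter (fun x : Fin d => t ≤ (h x : ℤ))).card
      = Multiset.countP (fun x : Fin d => t ≤ (h x : ℤ)) Finset.univ.val := by
    rw [Multiset.countP_eq_card_filter]
    rfl
  rw [h1]
  have h2 := Multiset.countP_map h Finset.univ.val (fun a : ℕ => t ≤ (a : ℤ))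
  rw [Fin.univ_val_map] at h2
  have h3 : Multiset.countP (fun a : ℕ => t ≤ (a : ℤ)) (List.ofFn h : Multiset ℕ)
      = List.countP (fun a : ℕ => decide (t ≤ (a : ℤ))) (List.ofFn h) := rfl
  rw [← h3, h2, Multiset.countP_eq_card_filter]

lemma le_cnt {d : ℕ} (h : Fin d → ℕ) (r : ℕ) {j : ℕ} (hj1 : 1 ≤ j) (hjd : j ≤ d) :
    j ≤ cnt h r j := by
  set L := List.insertionSort (· ≥ ·) (List.ofFn h) with hL
  have hlen : L.length = d := by rw [hL, List.length_insertionSort, List.length_ofFn]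
  have hj : j - 1 < L.length := by omega
  have hcnt : (Finset.univ.filter (fun x : Fin d => (orderStat h j : ℤ) ≤ (h x : ℤ))).card
      ≤ cnt h r j := by
    apply Finset.card_le_card
    intro x hx
    simp only [Finset.mem_filter, Finset.mem_univ, true_and] at hx ⊢
    omega
  refine le_trans ?_ hcnt
  rw [card_filter_le_eq_countP]
  rw [← hL]
  have hsplit : List.countP (fun a : ℕ => decide ((orderStat h j : ℤ) ≤ (a : ℤ))) L
      = List.countP (fun a : ℕ => decide ((orderStat h j : ℤ) ≤ (a : ℤ))) (L.take j)
        + List.countP (fun a : ℕ => decide ((orderStat h j : ℤ) ≤ (a : ℤ))) (L.drop j) := by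
    rw [← List.countP_append, List.take_append_drop]
  rw [hsplit]
  have htake : List.countP (fun a : ℕ => decide ((orderStat h j : ℤ) ≤ (a : ℤ))) (L.take j)
      = (L.take j).length := by
    rw [List.countP_eq_length]
    intro a ha
    rw [List.mem_take_iff_getElem] at ha
    obtain ⟨idx, hm, rfl⟩ := ha
    have hidx : idx < L.length := lt_of_lt_of_le hm (by simp)
    have hord : orderStat h j = L[j-1] := by
      unfold orderStat
      rw [← hL, List.getD_eq_getElem?_getD, List.getElem?_eq_getElem hj]
      simp
    have hrel : L[j-1] ≤ L[idx] := by
      have := (sorted_ord h).rel_get_of_le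
        (a := ⟨idx, (by simpa [hL] using hidx : idx < (List.insertionSort (· ≥ ·) (List.ofFn h)).length)⟩)
        (b := ⟨j-1, (by simpa [hL] using hj : j - 1 < (List.insertionSort (· ≥ ·) (List.ofFn h)).length)⟩)
        (by simp [Fin.le_def]; omega)
      simpa [hL, List.get_eq_getElem] using this
    simp only [decide_eq_true_eq]
    rw [hord]
    exact_mod_cast hrel
  rw [htake, List.length_take]
  simp [hlen]
  omega

end OrderStatLemmas

/-- Counting formula for the size of `G(r, i)`:
`|G(r,i)| = (∏_{j<i} (c(r-1,j) - (j-1))) · (c(r,i) - c(r-1,i)) · (∏_{j>i} (c(r,j) - (j-1)))`. -/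
theorem groupG_card {d k : ℕ} [NeZero k] (hkd : k ≤ d) (h : Fin d → ℕ)
    (r : ℕ) (hr : 1 ≤ r) (i : ℕ) (hi1 : 1 ≤ i) (hik : i ≤ k) :
    ((groupG (k := k) h r i).card : ℤ) =
      (∏ j ∈ Finset.Icc 1 (i - 1), ((cnt h (r - 1) j : ℤ) - ((j : ℤ) - 1))) *
        ((cnt h r i : ℤ) - (cnt h (r - 1) i : ℤ)) *
        (∏ j ∈ Finset.Icc (i + 1) k, ((cnt h r j : ℤ) - ((j : ℤ) - 1))) := by
  classical
  have hr1cast : (((r - 1 : ℕ)) : ℤ) = (r : ℤ) - 1 := by omega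
  set B : Fin k → Finset (Fin d) := fun j =>
    if (j:ℕ)+1 < i then
      Finset.univ.filter (fun x => (orderStat h ((j:ℕ)+1) : ℤ) - (r:ℤ) < (h x : ℤ))
    else if (j:ℕ)+1 = i then
      Finset.univ.filter (fun x => (h x : ℤ) = (orderStat h ((j:ℕ)+1) : ℤ) - (r:ℤ))
    else Finset.univ.filter (fun x => (orderStat h ((j:ℕ)+1) : ℤ) - (r:ℤ) ≤ (h x : ℤ)) with hB
  have hmemB : ∀ (j : Fin k) (x : Fin d), x ∈ B j ↔
      (if (j:ℕ)+1 < i then (orderStat h ((j:ℕ)+1) : ℤ) - (r:ℤ) < (h x : ℤ)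
       else if (j:ℕ)+1 = i then (h x : ℤ) = (orderStat h ((j:ℕ)+1) : ℤ) - (r:ℤ)
       else (orderStat h ((j:ℕ)+1) : ℤ) - (r:ℤ) ≤ (h x : ℤ)) := by
    intro j x
    simp only [hB]
    split_ifs <;> simp
  have hG : groupG (k := k) h r i = Finset.univ.filter
      (fun s : Fin k → Fin d => Function.Injective s ∧ ∀ j, s j ∈ B j) := by
    ext s
    simp only [groupG, Finset.mem_filter, Finset.mem_univ, true_and]
    constructor
    · rintro ⟨hinj, _, h1, h2, h3⟩
      refine ⟨hinj, fun j => ?_⟩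
      rw [hmemB]
      split_ifs with hj1 hj2
      · exact h1 j hj1
      · exact h2 j hj2
      · exact h3 j (by omega)
    · rintro ⟨hinj, hmem⟩
      have hle : ∀ j : Fin k, (orderStat h ((j:ℕ)+1) : ℤ) - (h (s j) : ℤ) ≤ (r:ℤ) := by
        intro j
        have := (hmemB j (s j)).mp (hmem j)
        split_ifs at this <;> omega
      have hj0lt : i - 1 < k := by omega
      set j0 : Fin k := ⟨i-1, hj0lt⟩ with hj0
      have hj0i : (j0:ℕ)+1 = i := by show (i-1)+1 = i; omega
      have heq0 : (h (s j0) : ℤ) = (orderStat h ((j0:ℕ)+1) : ℤ) - (r:ℤ) := by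
        have := (hmemB j0 (s j0)).mp (hmem j0)
        rw [if_neg (by omega), if_pos hj0i] at this
        exact this
      refine ⟨hinj, ?_, ?_, ?_, ?_⟩
      · apply le_antisymm
        · exact Finset.sup'_le _ _ (fun j _ => hle j)
        · calc (r:ℤ) = (orderStat h ((j0:ℕ)+1) : ℤ) - (h (s j0) : ℤ) := by omega
            _ ≤ seqLoss h s := by
              unfold seqLoss
              exact Finset.le_sup'
                (fun j : Fin k => (orderStat h ((j:ℕ)+1) : ℤ) - (h (s j) : ℤ))
                (Finset.mem_univ j0)
      · intro j hj
        have := (hmemB j (s j)).mp (hmem j)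
        rwa [if_pos hj] at this
      · intro j hj
        have := (hmemB j (s j)).mp (hmem j)
        rwa [if_neg (by omega), if_pos hj] at this
      · intro j hj
        have := (hmemB j (s j)).mp (hmem j)
        rwa [if_neg (by omega), if_neg (by omega)] at this
  have hsub : ∀ l j : Fin k, l < j → (j:ℕ)+1 ≠ i → B l ⊆ B j := by
    intro l j hlj hji x hx
    rw [hmemB] at hx ⊢
    have hllej : (l:ℕ)+1 ≤ (j:ℕ)+1 := by
      have := (Fin.lt_iff_val_lt_val.mp hlj); omega
    have hanti := orderStat_anti h hllej
    split_ifs at hx ⊢ <;> omega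
  have hdisj : ∀ l j : Fin k, l < j → (j:ℕ)+1 = i → Disjoint (B l) (B j) := by
    intro l j hlj hji
    rw [Finset.disjoint_left]
    intro x hxl hxj
    rw [hmemB] at hxl hxj
    have hlv : (l:ℕ)+1 < i := by
      have := (Fin.lt_iff_val_lt_val.mp hlj); omega
    rw [if_pos hlv] at hxl
    rw [if_neg (by omega), if_pos hji] at hxj
    have hllej : (l:ℕ)+1 ≤ (j:ℕ)+1 := by omega
    have hanti := orderStat_anti h hllej
    omega
  have hcond : ∀ l j : Fin k, l < j → B l ⊆ B j ∨ Disjoint (B l) (B j) := by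
    intro l j hlj
    by_cases hji : (j:ℕ)+1 = i
    · exact Or.inr (hdisj l j hlj hji)
    · exact Or.inl (hsub l j hlj hji)
  have hcard : ∀ j : Fin k, ((B j).card : ℤ) =
      if (j:ℕ)+1 < i then (cnt h (r-1) ((j:ℕ)+1) : ℤ)
      else if (j:ℕ)+1 = i then (cnt h r i : ℤ) - (cnt h (r-1) i : ℤ)
      else (cnt h r ((j:ℕ)+1) : ℤ) := by
    intro j
    simp only [hB]
    split_ifs with c1 c2
    · congr 1
      rw [cnt]
      congr 1
      apply Finset.filter_congr
      intro x _
      constructor <;> intro <;> omega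
    · have hsubset : (Finset.univ.filter (fun x : Fin d =>
          (orderStat h i : ℤ) - ((r-1 : ℕ) : ℤ) ≤ (h x : ℤ)))
          ⊆ (Finset.univ.filter (fun x : Fin d =>
          (orderStat h i : ℤ) - (r : ℤ) ≤ (h x : ℤ))) := by
        intro x hx
        simp only [Finset.mem_filter, Finset.mem_univ, true_and] at hx ⊢
        omega
      have hsd : Finset.univ.filter (fun x : Fin d =>
            (h x : ℤ) = (orderStat h ((j:ℕ)+1) : ℤ) - (r:ℤ))
          = (Finset.univ.filter (fun x : Fin d =>
              (orderStat h i : ℤ) - (r : ℤ) ≤ (h x : ℤ)))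
            \ (Finset.univ.filter (fun x : Fin d =>
              (orderStat h i : ℤ) - ((r-1:ℕ) : ℤ) ≤ (h x : ℤ))) := by
        ext x
        simp only [Finset.mem_sdiff, Finset.mem_filter, Finset.mem_univ, true_and, c2]
        omega
      rw [hsd, Finset.card_sdiff_of_subset hsubset]
      have hle := Finset.card_le_card hsubset
      rw [cnt, cnt]
      push_cast [hle]
      ring
    · rw [cnt]
  have hBlne : ∀ l : Fin k, (l:ℕ)+1 < i → (B l).Nonempty := by
    intro l hl
    rw [← Finset.card_pos]
    have := hcard l
    rw [if_pos hl] at this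
    have hge := le_cnt h (r-1) (j := (l:ℕ)+1) (by omega) (by have := l.isLt; omega)
    omega
  have hn : ∀ j : Fin k,
      ((Finset.univ.filter (fun l : Fin k => l < j ∧ B l ⊆ B j)).card : ℤ)
        = if (j:ℕ)+1 = i then 0 else ((j:ℕ) : ℤ) := by
    intro j
    split_ifs with hji
    · norm_cast
      rw [Finset.card_eq_zero, Finset.filter_eq_empty_iff]
      intro l _
      rintro ⟨hlj, hsubl⟩
      obtain ⟨x, hx⟩ := hBlne l (by have := Fin.lt_iff_val_lt_val.mp hlj; omega)
      exact Finset.disjoint_left.mp (hdisj l j hlj hji) hx (hsubl hx)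
    · have heq1 : Finset.univ.filter (fun l : Fin k => l < j ∧ B l ⊆ B j)
          = Finset.univ.filter (fun l : Fin k => l < j) := by
        apply Finset.filter_congr
        intro l _
        constructor
        · exact fun hl => hl.1
        · exact fun hl => ⟨hl, hsub l j hl hji⟩
      have heq2 : Finset.univ.filter (fun l : Fin k => l < j) = Finset.Iio j := by
        ext l; simp
      rw [heq1, heq2, Fin.card_Iio]
  rw [hG, chain_count k B hcond]
  set F : ℕ → ℤ := fun m =>
    if m < i then (cnt h (r-1) m : ℤ) - ((m:ℤ) - 1)
    else if m = i then (cnt h r i : ℤ) - (cnt h (r-1) i : ℤ)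
    else (cnt h r m : ℤ) - ((m:ℤ) - 1) with hF
  have hfac : ∀ j : Fin k, ((B j).card : ℤ) -
      ((Finset.univ.filter (fun l : Fin k => l < j ∧ B l ⊆ B j)).card : ℤ)
        = F ((j:ℕ)+1) := by
    intro j
    rw [hcard j, hn j]
    simp only [hF]
    by_cases c1 : (j:ℕ)+1 < i
    · rw [if_pos c1, if_pos c1, if_neg (by omega)]
      try push_cast
      try ring
    · by_cases c2 : (j:ℕ)+1 = i
      · rw [if_neg c1, if_pos c2, if_pos c2, if_neg (by omega), if_pos c2]
        try push_cast
        try ring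
      · rw [if_neg c1, if_neg c2, if_neg c2, if_neg (by omega), if_neg c2]
        try push_cast
        try ring
  rw [Finset.prod_congr rfl (fun j _ => hfac j)]
  have h1 : (∏ j : Fin k, F ((j:ℕ)+1)) = ∏ m ∈ Finset.range k, F (m+1) :=
    Fin.prod_univ_eq_prod_range (fun m => F (m+1)) k
  rw [h1]
  have h2 : (∏ m ∈ Finset.Ico 1 (k+1), F m) = ∏ m ∈ Finset.range k, F (m+1) := by
    rw [Finset.prod_Ico_eq_prod_range]
    simp only [Nat.add_sub_cancel]
    exact Finset.prod_congr rfl (fun m _ => by rw [Nat.add_comm])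
  rw [← h2]
  rw [← Finset.prod_Ico_consecutive F (show 1 ≤ i by omega) (show i ≤ k+1 by omega)]
  rw [Finset.prod_eq_prod_Ico_succ_bot (show i < k+1 by omega) F]
  have hIcoIcc1 : Finset.Ico 1 i = Finset.Icc 1 (i-1) := by
    rw [show i = (i-1)+1 by omega, Finset.Ico_add_one_right_eq_Icc]
    congr 1
  have hIcoIcc2 : Finset.Ico (i+1) (k+1) = Finset.Icc (i+1) k := Finset.Ico_add_one_right_eq_Icc _ _
  rw [hIcoIcc1, hIcoIcc2]
  have hp1 : (∏ m ∈ Finset.Icc 1 (i-1), F m)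
      = ∏ m ∈ Finset.Icc 1 (i-1), ((cnt h (r-1) m : ℤ) - ((m:ℤ) - 1)) := by
    apply Finset.prod_congr rfl
    intro m hm
    simp only [Finset.mem_Icc] at hm
    simp only [hF]
    rw [if_pos (by omega)]
  have hFi : F i = (cnt h r i : ℤ) - (cnt h (r-1) i : ℤ) := by
    simp only [hF]
    rw [if_neg (by omega)]
    simp
  have hp3 : (∏ m ∈ Finset.Icc (i+1) k, F m)
      = ∏ m ∈ Finset.Icc (i+1) k, ((cnt h r m : ℤ) - ((m:ℤ) - 1)) := by
    apply Finset.prod_congr rfl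
    intro m hm
    simp only [Finset.mem_Icc] at hm
    simp only [hF]
    rw [if_neg (by omega), if_neg (by omega)]
  rw [hp1, hFi, hp3]
  ring
end

section
/- Let h ∈ ℕ^d with d ≥ k and let ε > 0, β ∈ (0,1), τ = ⌈(2/ε)·ln(C(d,k)·k!/β)⌉. Then C(d,k)·k!·exp(-ε·τ/2) ≤ β; consequently, the truncated exponential mechanism A sampling injective sequences s : [k] → [d] with probability proportional to exp(-ε·min(L(s),τ)/2) satisfies P[L(A(h)) ≥ τ] ≤ β, where L(s) = max_{j∈[k]}(h_(j) - h[s[j]]). -/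
/-- The `i`-th entry of the descending sort of `h` is `h` at a sorting permutation. -/
lemma orderStat_eq_sort {d : ℕ} (h : Fin d → ℕ) (i : Fin d) :
    orderStat h ((i : ℕ) + 1) = h (Tuple.sort h i.rev) := by
  set σ : Equiv.Perm (Fin d) := Tuple.sort h with hσ
  have hmono : Monotone (h ∘ σ) := Tuple.monotone_sort h
  set π : Equiv.Perm (Fin d) := (Fin.revPerm).trans σ with hπ
  set L2 : List ℕ := List.ofFn (h ∘ π) with hL2
  have hsorted2 : L2.Pairwise (· ≥ ·) := by
    rw [hL2, List.pairwise_ofFn]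
    intro a b hab
    have : b.rev ≤ a.rev := by
      rw [Fin.rev_le_rev]
      exact hab.le
    exact hmono this
  have hperm : List.Perm (List.insertionSort (· ≥ ·) (List.ofFn h)) L2 := by
    refine (List.perm_insertionSort _ _).trans ?_
    exact (Equiv.Perm.ofFn_comp_perm π h).symm
  have heq : List.insertionSort (· ≥ ·) (List.ofFn h) = L2 :=
    hperm.eq_of_pairwise' (List.pairwise_insertionSort _ _) hsorted2
  have hi : (i : ℕ) < L2.length := by
    rw [hL2, List.length_ofFn]; exact i.isLt
  rw [orderStat, heq]
  simp only [Nat.add_sub_cancel]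
  rw [List.getD_eq_getElem L2 0 hi]
  simp [hL2, hπ]

open Classical in
/-- With `τ = ⌈(2/ε) · ln (C(d,k)·k! / β)⌉` we have `C(d,k)·k!·exp(-ε τ/2) ≤ β`, and
consequently the truncated exponential mechanism, sampling injective sequences with
probability proportional to `exp (-ε · min (L s) τ / 2)`, outputs a sequence of loss `≥ τ`
with probability at most `β`. -/
theorem truncated_mechanism_utility {d k : ℕ} [NeZero k] (hkd : k ≤ d) (h : Fin d → ℕ)
    (ε : ℝ) (hε : 0 < ε) (β : ℝ) (hβ : β ∈ Set.Ioo (0 : ℝ) 1)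
    (τ : ℤ)
    (hτdef : τ = ⌈(2 / ε) * Real.log (((d.choose k : ℝ) * (k.factorial : ℝ)) / β)⌉) :
    ((d.choose k : ℝ) * (k.factorial : ℝ)) * Real.exp (-ε * (τ : ℝ) / 2) ≤ β ∧
    (∑ s ∈ Finset.univ.filter (fun s : Fin k → Fin d =>
          Function.Injective s ∧ τ ≤ seqLoss h s),
        Real.exp (-ε * min ((seqLoss h s : ℝ)) ((τ : ℝ)) / 2)) /
      (∑ s ∈ Finset.univ.filter (fun s : Fin k → Fin d => Function.Injective s),
        Real.exp (-ε * min ((seqLoss h s : ℝ)) ((τ : ℝ)) / 2)) ≤ β := by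
  obtain ⟨hβ0, hβ1⟩ := hβ
  set C : ℝ := (d.choose k : ℝ) * (k.factorial : ℝ) with hCdef
  have hC1 : (1 : ℝ) ≤ C := by
    have h1 : 1 ≤ d.choose k := Nat.choose_pos hkd
    have h2 : 1 ≤ k.factorial := k.factorial_pos
    have : ((1 : ℕ) : ℝ) * ((1 : ℕ) : ℝ) ≤ C := by
      apply mul_le_mul
      · exact_mod_cast h1
      · exact_mod_cast h2
      · norm_num
      · positivity
    simpa using this
  have hCpos : (0 : ℝ) < C := lt_of_lt_of_le one_pos hC1
  have hlog : (2 / ε) * Real.log (C / β) ≤ (τ : ℝ) := by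
    rw [hτdef]; exact Int.le_ceil _
  have hlogpos : 0 < Real.log (C / β) := by
    apply Real.log_pos
    rw [lt_div_iff₀ hβ0]
    nlinarith
  have hτpos : (0 : ℤ) < τ := by
    rw [hτdef]
    apply Int.ceil_pos.2
    positivity
  -- Part 1
  have hloge : Real.log (C / β) ≤ ε * (τ : ℝ) / 2 := by
    have h2 := mul_le_mul_of_nonneg_left hlog hε.le
    have : ε * ((2 / ε) * Real.log (C / β)) = 2 * Real.log (C / β) := by
      field_simp
    rw [this] at h2
    linarith
  have hexp : Real.exp (-ε * (τ : ℝ) / 2) ≤ β / C := by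
    have h3 : Real.exp (-ε * (τ : ℝ) / 2) ≤ Real.exp (-(Real.log (C / β))) := by
      apply Real.exp_le_exp.2; linarith
    rwa [Real.exp_neg, Real.exp_log (by positivity), inv_div] at h3
  have hpart1 : C * Real.exp (-ε * (τ : ℝ) / 2) ≤ β := by
    calc C * Real.exp (-ε * (τ : ℝ) / 2) ≤ C * (β / C) :=
          mul_le_mul_of_nonneg_left hexp hCpos.le
      _ = β := by field_simp
  refine ⟨hpart1, ?_⟩
  -- Part 2
  set F := fun s : Fin k → Fin d => Real.exp (-ε * min ((seqLoss h s : ℝ)) ((τ : ℝ)) / 2)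
  -- the optimal sequence
  set s0 : Fin k → Fin d := fun j => Tuple.sort h (Fin.castLE hkd j).rev with hs0
  have hs0inj : Function.Injective s0 := by
    intro a b hab
    have := (Tuple.sort h).injective hab
    have := Fin.rev_injective this
    exact Fin.castLE_injective hkd this
  have hs0loss : seqLoss h s0 ≤ 0 := by
    apply Finset.sup'_le
    intro j _
    have := orderStat_eq_sort h (Fin.castLE hkd j)
    simp only [Fin.coe_castLE] at this
    rw [this]
    simp [hs0]
  -- denominator ≥ 1
  have hden : (1 : ℝ) ≤ ∑ s ∈ Finset.univ.filter
      (fun s : Fin k → Fin d => Function.Injective s), F s := by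
    have hmem : s0 ∈ Finset.univ.filter (fun s : Fin k → Fin d => Function.Injective s) := by
      simp [hs0inj]
    have hterm : (1 : ℝ) ≤ F s0 := by
      rw [show (1 : ℝ) = Real.exp 0 by simp]
      apply Real.exp_le_exp.2
      have hmin : min ((seqLoss h s0 : ℝ)) ((τ : ℝ)) ≤ 0 := by
        apply min_le_of_left_le
        exact_mod_cast hs0loss
      nlinarith
    calc (1 : ℝ) ≤ F s0 := hterm
      _ ≤ _ := Finset.single_le_sum (f := F) (fun s _ => (Real.exp_pos _).le) hmem
  -- numerator ≤ β
  have hnum : (∑ s ∈ Finset.univ.filter (fun s : Fin k → Fin d =>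
      Function.Injective s ∧ τ ≤ seqLoss h s), F s) ≤ β := by
    have hstep : ∀ s ∈ Finset.univ.filter (fun s : Fin k → Fin d =>
        Function.Injective s ∧ τ ≤ seqLoss h s),
        F s = Real.exp (-ε * (τ : ℝ) / 2) := by
      intro s hs
      simp only [Finset.mem_filter] at hs
      have : min ((seqLoss h s : ℝ)) ((τ : ℝ)) = (τ : ℝ) := by
        apply min_eq_right
        exact_mod_cast hs.2.2
      simp [F, this]
    rw [Finset.sum_congr rfl hstep, Finset.sum_const, nsmul_eq_mul]
    have hcard : ((Finset.univ.filter (fun s : Fin k → Fin d =>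
        Function.Injective s ∧ τ ≤ seqLoss h s)).card : ℝ) ≤ C := by
      have h1 : (Finset.univ.filter (fun s : Fin k → Fin d =>
          Function.Injective s ∧ τ ≤ seqLoss h s)).card ≤
          (Finset.univ.filter (fun s : Fin k → Fin d => Function.Injective s)).card := by
        apply Finset.card_le_card
        intro s hs
        simp only [Finset.mem_filter] at hs ⊢
        exact ⟨hs.1, hs.2.1⟩
      have h2 : (Finset.univ.filter (fun s : Fin k → Fin d =>
          Function.Injective s)).card = Fintype.card (Fin k ↪ Fin d) := by
        rw [Fintype.card_congr (Equiv.subtypeInjectiveEquivEmbedding (Fin k) (Fin d)).symm]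
        rw [Fintype.card_subtype]
      have h3 : Fintype.card (Fin k ↪ Fin d) = d.descFactorial k := by
        rw [Fintype.card_embedding_eq, Fintype.card_fin, Fintype.card_fin]
      have h4 : d.descFactorial k = k.factorial * d.choose k :=
        Nat.descFactorial_eq_factorial_mul_choose d k
      have : (Finset.univ.filter (fun s : Fin k → Fin d =>
          Function.Injective s ∧ τ ≤ seqLoss h s)).card ≤ k.factorial * d.choose k := by
        omega
      calc ((Finset.univ.filter (fun s : Fin k → Fin d =>
            Function.Injective s ∧ τ ≤ seqLoss h s)).card : ℝ)
          ≤ ((k.factorial * d.choose k : ℕ) : ℝ) := by exact_mod_cast this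
        _ = C := by push_cast [hCdef]; ring
    calc ((Finset.univ.filter (fun s : Fin k → Fin d =>
          Function.Injective s ∧ τ ≤ seqLoss h s)).card : ℝ) * Real.exp (-ε * (τ : ℝ) / 2)
        ≤ C * Real.exp (-ε * (τ : ℝ) / 2) :=
          mul_le_mul_of_nonneg_right hcard (Real.exp_pos _).le
      _ ≤ β := hpart1
  have hnumnonneg : (0 : ℝ) ≤ ∑ s ∈ Finset.univ.filter (fun s : Fin k → Fin d =>
      Function.Injective s ∧ τ ≤ seqLoss h s), F s :=
    Finset.sum_nonneg fun s _ => (Real.exp_pos _).le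
  calc _ ≤ (∑ s ∈ Finset.univ.filter (fun s : Fin k → Fin d =>
        Function.Injective s ∧ τ ≤ seqLoss h s), F s) := div_le_self hnumnonneg hden
    _ ≤ β := hnum
end
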